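/- arXiv:2005.11528 — 4 statements merged into one kernel-verified Lean document; each statement's English description precedes it below -/
import Mathlib

section
/- For every p ∈ (0,1], the distributions of Y under the joint intervention do(X1 = false, X2 = true) differ between M̈ and M̃: the pushforward of Bernoulli(p) under u ↦ false ∧ true ∧ u is the point mass at false, while the pushforward under u ↦ true ∧ u is the Bernoulli(p) PMF, and these two PMFs on Bool are not equal. -/
open PMF

namespace PMF

theorem map_false_and (q : PMF Bool) (f : Bool → Bool) :
    q.map (fun u => false && f u) = pure false := by
  simp only [Bool.false_and]
  exact map_const q false

theorem map_true_and (q : PMF Bool) : q.map (fun u => true && u) = q := by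
  simp only [Bool.true_and]
  exact map_id q

theorem bernoulli_ne_pure_false {p : NNReal} (h : p ≤ 1) (hp : p ≠ 0) :
    bernoulli p h ≠ pure false := by
  intro heq
  have hmass : bernoulli p h true = pure false true := by rw [heq]
  simp only [bernoulli_apply, cond_true, pure_apply, Bool.true_eq_false, if_false] at hmass
  exact hp (by exact_mod_cast hmass)

end PMF

/-- For `p ∈ (0, 1]`, the distributions of `Y` under the joint intervention
`do(X1 = false, X2 = true)` differ between `M̈` (where `Y = X1 ∧ X2 ∧ U = false ∧ true ∧ u`)
and `M̃` (where `Y = X2 ∧ U = true ∧ u`): the former pushforward is the point mass at `false`,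
the latter is the Bernoulli(`p`) PMF, and the two PMFs are not equal. -/
theorem joint_interventional_distributions_differ (p : ENNReal) (hp0 : 0 < p) (hp : p ≤ 1) :
    (PMF.bernoulli p.toNNReal (by simpa using ENNReal.toNNReal_mono ENNReal.one_ne_top hp)).map (fun u => false && (true && u)) = PMF.pure false ∧
    (PMF.bernoulli p.toNNReal (by simpa using ENNReal.toNNReal_mono ENNReal.one_ne_top hp)).map (fun u => true && u) = PMF.bernoulli p.toNNReal (by simpa using ENNReal.toNNReal_mono ENNReal.one_ne_top hp) ∧
    (PMF.bernoulli p.toNNReal (by simpa using ENNReal.toNNReal_mono ENNReal.one_ne_top hp)).map (fun u => false && (true && u))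
      ≠ (PMF.bernoulli p.toNNReal (by simpa using ENNReal.toNNReal_mono ENNReal.one_ne_top hp)).map (fun u => true && u) := by
  have hp_ne_zero : p.toNNReal ≠ 0 :=
    (ENNReal.toNNReal_pos hp0.ne' (ne_top_of_le_ne_top ENNReal.one_ne_top hp)).ne'
  refine ⟨map_false_and _ _, map_true_and _, ?_⟩
  rw [map_false_and, map_true_and]
  exact (bernoulli_ne_pure_false _ hp_ne_zero).symm
end

section
/- (Non-identifiability of joint interventional effects in unconstrained SCMs.) For every p ∈ (0,1), the models M̈ and M̃ induce identical observational distributions of (X1, X2, Y), identical do(X1 = b) interventional distributions of (X2, Y) for every b : Bool, and identical do(X2 = b) interventional distributions of (X1, Y) for every b : Bool, yet their distributions of Y under the joint intervention do(X1 = false, X2 = true) are distinct. Hence there exist two structural causal models that agree on the observational distribution and on all single-variable interventional distributions but disagree on a joint interventional distribution. -/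
/-! Both models compute `Y` as `U` conjoined with the current values of the parents of `Y`.
Unless `X2` is fixed independently of `X1`, `X2 = X1 ∧ U` forces `X1` whenever `X2` holds, and
under `do(X2 = b)` alone `X1 = U`; so the extra conjunct `X1` of `M̈` is redundant in the
observational and all single-variable regimes. Under `do(X1 = false, X2 = true)` it is not:
`M̈` yields `Y = false` surely, while `M̃` yields `Y = U`, which is true with probability `p > 0`. -/

open PMF NNReal

theorem PMF.pure_false_ne_bernoulli {p : ℝ≥0} (h : p ≤ 1) (hp : p ≠ 0) :
    PMF.pure false ≠ PMF.bernoulli p h := by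
  intro heq
  have hp_eq_zero : (0 : ENNReal) = p := by
    simpa [PMF.bernoulli_apply] using congrArg (· true) heq
  exact hp (by exact_mod_cast hp_eq_zero.symm)

/-- Non-identifiability of joint interventional effects in unconstrained SCMs: for every
`p ∈ (0, 1)`, the SCMs `M̈` (`X1 = U`, `X2 = X1 ∧ U`, `Y = X1 ∧ X2 ∧ U`) and `M̃`
(`X1 = U`, `X2 = X1 ∧ U`, `Y = X2 ∧ U`), with `U ~ Bernoulli(p)`, induce identical
observational distributions of `(X1, X2, Y)`, identical `do(X1 = b)` interventional
distributions of `(X2, Y)` for every `b`, and identical `do(X2 = b)` interventional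
distributions of `(X1, Y)` for every `b`, yet their distributions of `Y` under the joint
intervention `do(X1 = false, X2 = true)` are distinct. -/
theorem nonidentifiability_unconstrained_SCM (p : ENNReal) (hp0 : 0 < p) (hp1 : p < 1) :
    (PMF.bernoulli p.toNNReal (by simpa using ENNReal.toNNReal_mono ENNReal.one_ne_top hp1.le)).map (fun u => (u, u && u, u && ((u && u) && u)))
      = (PMF.bernoulli p.toNNReal (by simpa using ENNReal.toNNReal_mono ENNReal.one_ne_top hp1.le)).map (fun u => (u, u && u, (u && u) && u)) ∧
    (∀ b : Bool,
      (PMF.bernoulli p.toNNReal (by simpa using ENNReal.toNNReal_mono ENNReal.one_ne_top hp1.le)).map (fun u => (b && u, b && ((b && u) && u)))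
        = (PMF.bernoulli p.toNNReal (by simpa using ENNReal.toNNReal_mono ENNReal.one_ne_top hp1.le)).map (fun u => (b && u, (b && u) && u))) ∧
    (∀ b : Bool,
      (PMF.bernoulli p.toNNReal (by simpa using ENNReal.toNNReal_mono ENNReal.one_ne_top hp1.le)).map (fun u => (u, u && (b && u)))
        = (PMF.bernoulli p.toNNReal (by simpa using ENNReal.toNNReal_mono ENNReal.one_ne_top hp1.le)).map (fun u => (u, b && u))) ∧
    (PMF.bernoulli p.toNNReal (by simpa using ENNReal.toNNReal_mono ENNReal.one_ne_top hp1.le)).map (fun u => false && (true && u))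
      ≠ (PMF.bernoulli p.toNNReal (by simpa using ENNReal.toNNReal_mono ENNReal.one_ne_top hp1.le)).map (fun u => true && u) := by
  refine ⟨?observational, fun b => ?do_X1, fun b => ?do_X2, ?do_X1_X2⟩
  case observational => exact congrArg _ (funext fun u => by cases u <;> rfl)
  case do_X1 => exact congrArg _ (funext fun u => by cases b <;> cases u <;> rfl)
  case do_X2 => exact congrArg _ (funext fun u => by cases b <;> cases u <;> rfl)
  case do_X1_X2 =>
    change PMF.map (Function.const Bool false) _ ≠ PMF.map id _
    rw [PMF.map_const, PMF.map_id]
    exact PMF.pure_false_ne_bernoulli _ (ENNReal.toNNReal_pos hp0.ne' hp1.ne_top).ne'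
end

section
/- Let n ∈ ℕ and let f : ℝⁿ → ℝⁿ be continuously differentiable such that each component f_i depends only on the coordinates with index less than i. Then g(x) := x − f(x) is a bijection of ℝⁿ that preserves Lebesgue measure: the pushforward of n-dimensional Lebesgue measure under g equals Lebesgue measure. -/
/-!
Write `g x = x - f x`. Since `f x i` only sees the coordinates below `i`, the equation `g x = z`
can be solved one coordinate at a time, `x i = z i + f x i`, which makes `g` bijective; the
solution is reached by iterating `x ↦ z + f x` `n` times. The Jacobian matrix of `f` is strictly
lower triangular, so that of `g` is unipotent lower triangular with determinant `1`, and the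
change-of-variables formula shows that `g` preserves Lebesgue measure.
-/

open MeasureTheory Function

section Triangular

variable {ι G : Type*}

theorem injective_sub_of_dependsOn_Iio [Preorder ι] [WellFoundedLT ι] [AddGroup G]
    {f : (ι → G) → ι → G} (hf : ∀ i, DependsOn (fun x => f x i) (Set.Iio i)) :
    Injective fun x => x - f x := by
  intro x y hxy
  funext i
  induction i using WellFoundedLT.induction with
  | _ i ih =>
    have hi := congrFun hxy i
    simp only [Pi.sub_apply, hf i ih] at hi
    exact sub_left_inj.mp hi

theorem isFixedPt_iterate_of_dependsOn_Iio {α : Type*} {n : ℕ} {h : (Fin n → α) → Fin n → α}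
    (hh : ∀ i, DependsOn (fun x => h x i) (Set.Iio i)) (x : Fin n → α) :
    IsFixedPt h (h^[n] x) := by
  have stable : ∀ k, ∀ j : Fin n, (j : ℕ) < k → h^[k + 1] x j = h^[k] x j := by
    intro k
    induction k with
    | zero => intro j hj; omega
    | succ k ih =>
      intro j hj
      calc h^[k + 2] x j = h (h^[k + 1] x) j := by rw [iterate_succ_apply']
        _ = h (h^[k] x) j := hh j fun i (hi : i < j) => ih i (by omega)
        _ = h^[k + 1] x j := by rw [iterate_succ_apply']
  funext j
  simpa only [iterate_succ_apply'] using stable n j j.isLt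

theorem surjective_sub_of_dependsOn_Iio {n : ℕ} [AddGroup G] {f : (Fin n → G) → Fin n → G}
    (hf : ∀ i, DependsOn (fun x => f x i) (Set.Iio i)) :
    Surjective fun x => x - f x := by
  intro z
  have hdep : ∀ i, DependsOn (fun x => (z + f x) i) (Set.Iio i) := fun i x y hxy => by
    simp only [Pi.add_apply, hf i hxy]
  have hfix := isFixedPt_iterate_of_dependsOn_Iio hdep z
  exact ⟨_, sub_eq_iff_eq_add.mpr hfix.symm⟩

theorem bijective_sub_of_dependsOn_Iio {n : ℕ} [AddGroup G] {f : (Fin n → G) → Fin n → G}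
    (hf : ∀ i, DependsOn (fun x => f x i) (Set.Iio i)) :
    Bijective fun x => x - f x :=
  ⟨injective_sub_of_dependsOn_Iio hf, surjective_sub_of_dependsOn_Iio hf⟩

end Triangular

theorem fderiv_apply_single_eq_zero_of_dependsOn {𝕜 ι F : Type*} [NontriviallyNormedField 𝕜]
    [Fintype ι] [DecidableEq ι] [NormedAddCommGroup F] [NormedSpace 𝕜 F]
    {φ : (ι → 𝕜) → F} {s : Set ι} (hφ : DependsOn φ s) {j : ι} (hj : j ∉ s) (x : ι → 𝕜) :
    fderiv 𝕜 φ x (Pi.single j 1) = 0 := by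
  by_cases hdiff : DifferentiableAt 𝕜 φ x
  · have hline : (fun t : 𝕜 => φ (x + t • Pi.single j 1)) = fun _ => φ x := by
      funext t
      refine hφ fun i hi => ?_
      simp [show i ≠ j from fun h => hj (h ▸ hi)]
    rw [← hdiff.lineDeriv_eq_fderiv, lineDeriv, hline, deriv_const]
  · simp [fderiv_zero_of_not_differentiableAt hdiff]

theorem Matrix.det_one_sub_eq_one_of_strictlyLower {ι R : Type*} [Fintype ι] [DecidableEq ι]
    [LinearOrder ι] [CommRing R] {M : Matrix ι ι R} (hM : ∀ i j, i ≤ j → M i j = 0) :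
    (1 - M).det = 1 := by
  have hlower : (1 - M).IsLowerTriangular := fun i j (hij : i < j) => by
    simp [one_apply_ne hij.ne, hM i j hij.le]
  rw [det_of_isLowerTriangular _ hlower]
  simp [hM _ _ le_rfl]

theorem LinearMap.det_id_sub_eq_one_of_strictlyLower {ι R : Type*} [Fintype ι] [DecidableEq ι]
    [LinearOrder ι] [CommRing R] {L : (ι → R) →ₗ[R] ι → R}
    (hL : ∀ i j, i ≤ j → L (Pi.single j 1) i = 0) :
    LinearMap.det (LinearMap.id - L) = 1 := by
  rw [← LinearMap.det_toMatrix', map_sub, LinearMap.toMatrix'_id]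
  exact Matrix.det_one_sub_eq_one_of_strictlyLower fun i j hij => by
    rw [LinearMap.toMatrix'_apply]
    exact hL i j hij

theorem MeasureTheory.Measure.map_eq_self_of_bijective_of_abs_det_fderiv_eq_one {E : Type*}
    [NormedAddCommGroup E] [NormedSpace ℝ E] [FiniteDimensional ℝ E] [MeasurableSpace E]
    [BorelSpace E] (μ : Measure E) [μ.IsAddHaarMeasure] {g : E → E} {g' : E → E →L[ℝ] E}
    (hg : Bijective g) (hg' : ∀ x, HasFDerivAt g (g' x) x) (hdet : ∀ x, |(g' x).det| = 1) :
    μ.map g = μ := by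
  have hcov := map_withDensity_abs_det_fderiv_eq_addHaar μ nullMeasurableSet_univ
    (fun x _ => (hg' x).hasFDerivWithinAt) hg.injective.injOn
  simpa [hdet, hg.surjective.range_eq] using hcov

/-- If `f : ℝⁿ → ℝⁿ` is continuously differentiable and each component `f i` depends only
on the coordinates with index less than `i` (acyclicity), then `g x = x - f x` is a
bijection of `ℝⁿ` that preserves Lebesgue measure: the pushforward of `n`-dimensional
Lebesgue measure under `g` equals Lebesgue measure. -/
theorem sub_triangular_bijective_measurePreserving
    (n : ℕ) (f : (Fin n → ℝ) → (Fin n → ℝ))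
    (hf : ContDiff ℝ 1 f)
    (htri : ∀ (i : Fin n) (x y : Fin n → ℝ),
      (∀ j : Fin n, j < i → x j = y j) → f x i = f y i) :
    Function.Bijective (fun x : Fin n → ℝ => x - f x) ∧
    Measure.map (fun x : Fin n → ℝ => x - f x) volume = volume := by
  have hdep : ∀ i, DependsOn (fun x => f x i) (Set.Iio i) := fun i _ _ h => htri i _ _ h
  have hbij := bijective_sub_of_dependsOn_Iio hdep
  have hdiff : Differentiable ℝ f := hf.differentiable one_ne_zero
  have hg' : ∀ x, HasFDerivAt (fun x => x - f x) (ContinuousLinearMap.id ℝ _ - fderiv ℝ f x) x :=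
    fun x => (hasFDerivAt_id x).sub (hdiff x).hasFDerivAt
  have hdet : ∀ x, (ContinuousLinearMap.id ℝ _ - fderiv ℝ f x).det = 1 := fun x =>
    LinearMap.det_id_sub_eq_one_of_strictlyLower fun i j hij => by
      simpa [fderiv_apply (hdiff x) i] using
        fderiv_apply_single_eq_zero_of_dependsOn (hdep i) (not_lt.mpr hij) x
  exact ⟨hbij, volume.map_eq_self_of_bijective_of_abs_det_fderiv_eq_one hbij hg'
    fun x => by rw [hdet x, abs_one]⟩
end

section
/- Let n ∈ ℕ and let f : ℝⁿ → ℝⁿ be continuously differentiable such that each component f_i depends only on the coordinates with index less than i, let g(x) := x − f(x), and let S := g⁻¹ (which exists since g is a bijection). If μ is a measure on ℝⁿ with density p with respect to Lebesgue measure (μ = volume.withDensity p for a measurable p : ℝⁿ → [0,∞)), then the pushforward of μ under S has density x ↦ p(x − f(x)) with respect to Lebesgue measure. Equivalently, if the noise vector U has density p_U, then the solution X = S(U) of the acyclic additive noise SCM X = f(X) + U has density p_X(x) = p_U(x − f(x)). -/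
/-!
Because the `i`-th component of `f` reads only coordinates below `i`, the equation
`x - f x = u` can be solved one coordinate at a time along the order, so `g x = x - f x` is a
bijection. For the same reason the Jacobian of `f` is strictly lower triangular, so that of `g` is unipotent with determinant `1`,
and the change of variables formula for injective differentiable maps shows that `g` carries
`p ∘ g · volume` to `p · volume`.
-/

open MeasureTheory Function

def HasTriangularDependence {ι α β : Type*} [LT ι] (f : (ι → α) → ι → β) : Prop :=
  ∀ (i : ι) (x y : ι → α), (∀ j : ι, j < i → x j = y j) → f x i = f y i

section Solution

variable {ι G : Type*} [LinearOrder ι] [WellFoundedLT ι] [AddGroup G] {f : (ι → G) → ι → G}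

/-- Solves `x = f x + u` by recursion along the order of `ι`; the placeholder `0` only fills
coordinates that `f x i` does not read. -/
noncomputable def scmSolution (f : (ι → G) → ι → G) (u : ι → G) : ι → G :=
  wellFounded_lt.fix fun i x => u i + f (fun j => if h : j < i then x j h else 0) i

theorem HasTriangularDependence.scmSolution_sub (hf : HasTriangularDependence f) (u : ι → G) :
    scmSolution f u - f (scmSolution f u) = u := by
  funext i
  have hfix : scmSolution f u i =
      u i + f (fun j => if j < i then scmSolution f u j else 0) i := by
    rw [scmSolution, WellFounded.fix_eq]
    simp only [dite_eq_ite]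
  have hlower : f (fun j => if j < i then scmSolution f u j else 0) i = f (scmSolution f u) i :=
    hf i _ _ fun j hj => if_pos hj
  rw [Pi.sub_apply, hfix, hlower, add_sub_cancel_right]

theorem HasTriangularDependence.injective_sub (hf : HasTriangularDependence f) :
    Injective fun x => x - f x := by
  intro x y hxy
  funext i
  induction i using WellFoundedLT.induction with
  | ind i ih =>
    calc x i = (x - f x) i + f x i := (sub_add_cancel _ _).symm
      _ = (y - f y) i + f y i := by rw [show x - f x = y - f y from hxy, hf i x y ih]
      _ = y i := sub_add_cancel _ _

theorem HasTriangularDependence.bijective_sub (hf : HasTriangularDependence f) :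
    Bijective fun x => x - f x :=
  ⟨hf.injective_sub, fun u => ⟨scmSolution f u, hf.scmSolution_sub u⟩⟩

end Solution

section Jacobian

variable {ι : Type*} [Fintype ι] [LinearOrder ι]

theorem HasTriangularDependence.hasFDerivAt_apply_eq_zero {f : (ι → ℝ) → ι → ℝ}
    (hf : HasTriangularDependence f) {L : (ι → ℝ) →L[ℝ] ι → ℝ} {x : ι → ℝ}
    (hL : HasFDerivAt f L x) {i : ι} {v : ι → ℝ} (hv : ∀ j < i, v j = 0) : L v i = 0 := by
  have hline : HasDerivAt (fun t : ℝ => f (x + t • v) i) (L v i) 0 :=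
    hasDerivAt_pi.mp (hL.hasLineDerivAt v) i
  have hconst : (fun t : ℝ => f (x + t • v) i) = fun _ => f x i :=
    funext fun t => hf i _ _ fun j hj => by simp [hv j hj]
  rw [hconst] at hline
  exact hline.unique (hasDerivAt_const _ _)

theorem LinearMap.det_id_sub_eq_one_of_triangular {R : Type*} [CommRing R]
    {L : (ι → R) →ₗ[R] ι → R} (hL : ∀ i v, (∀ j < i, v j = 0) → L v i = 0) :
    LinearMap.det (LinearMap.id - L) = 1 := by
  have hupper : ∀ i j : ι, i ≤ j → L (Pi.single j 1) i = 0 := fun i j hij =>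
    hL i _ fun k hk => Pi.single_eq_of_ne (hk.trans_le hij).ne _
  have hlower : (LinearMap.toMatrix' (LinearMap.id - L)).IsLowerTriangular :=
    fun i j (hij : i < j) => by
      simp [LinearMap.toMatrix'_apply, hupper i j hij.le, Pi.single_eq_of_ne hij.ne]
  rw [← LinearMap.det_toMatrix', Matrix.det_of_isLowerTriangular _ hlower]
  refine Finset.prod_eq_one fun i _ => ?_
  simp [LinearMap.toMatrix'_apply, hupper i i le_rfl]

end Jacobian

theorem map_invFun_withDensity_eq_withDensity_abs_det_mul {E : Type*} [NormedAddCommGroup E]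
    [NormedSpace ℝ E] [FiniteDimensional ℝ E] [MeasurableSpace E] [BorelSpace E]
    (μ : Measure E) [μ.IsAddHaarMeasure] {g : E → E} {g' : E → E →L[ℝ] E}
    (hg : Bijective g) (hg' : ∀ x, HasFDerivAt g (g' x) x) (p : E → ENNReal) :
    (μ.withDensity p).map (invFun g) =
      μ.withDensity fun x => ENNReal.ofReal |(g' x).det| * p (g x) := by
  have hemb : MeasurableEmbedding g :=
    (continuous_iff_continuousAt.mpr fun x => (hg' x).continuousAt).measurableEmbedding hg.1
  have hpreimage : ∀ A, invFun g ⁻¹' A = g '' A := fun A => congrFun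
    (Set.image_eq_preimage_of_inverse (leftInverse_invFun hg.1) (rightInverse_invFun hg.2)).symm A
  have hmeas : Measurable (invFun g) := fun A hA => by
    rw [hpreimage]
    exact hemb.measurableSet_image' hA
  ext A hA
  rw [Measure.map_apply hmeas hA, hpreimage, withDensity_apply _ (hemb.measurableSet_image' hA),
    withDensity_apply _ hA, lintegral_image_eq_lintegral_abs_det_fderiv_mul μ hA
      (fun x _ => (hg' x).hasFDerivWithinAt) hg.1.injOn]

theorem density_of_scm_solution_general
    (n : ℕ) (f : (Fin n → ℝ) → (Fin n → ℝ))
    (hf : ContDiff ℝ 1 f)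
    (htri : ∀ (i : Fin n) (x y : Fin n → ℝ),
      (∀ j : Fin n, j < i → x j = y j) → f x i = f y i)
    (p : (Fin n → ℝ) → ENNReal) :
    (volume.withDensity p).map (Function.invFun (fun x : Fin n → ℝ => x - f x))
      = volume.withDensity (fun x => p (x - f x)) := by
  have htri : HasTriangularDependence f := htri
  have hdiff : ∀ x, HasFDerivAt f (fderiv ℝ f x) x := fun x =>
    (hf.differentiable one_ne_zero x).hasFDerivAt
  have hdet : ∀ x, (ContinuousLinearMap.id ℝ _ - fderiv ℝ f x).det = 1 := fun x =>
    LinearMap.det_id_sub_eq_one_of_triangular fun _ _ hv =>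
      htri.hasFDerivAt_apply_eq_zero (hdiff x) hv
  rw [map_invFun_withDensity_eq_withDensity_abs_det_mul volume htri.bijective_sub
    fun x => (hasFDerivAt_id x).sub (hdiff x)]
  simp only [hdet, abs_one, ENNReal.ofReal_one, one_mul]

/-- Change of variables for acyclic additive noise SCMs: if `f : ℝⁿ → ℝⁿ` is continuously
differentiable, each component `f i` depends only on the coordinates with index less than
`i`, `g x := x - f x`, and `S` is the inverse of the bijection `g`, then for any measure
`μ = volume.withDensity p`, the pushforward of `μ` under `S` has density `x ↦ p (x - f x)`
with respect to Lebesgue measure: if the noise `U` has density `p`, then the SCM solution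
`X = S U` has density `p_X x = p (x - f x)`. -/
theorem density_of_scm_solution
    (n : ℕ) (f : (Fin n → ℝ) → (Fin n → ℝ))
    (hf : ContDiff ℝ 1 f)
    (htri : ∀ (i : Fin n) (x y : Fin n → ℝ),
      (∀ j : Fin n, j < i → x j = y j) → f x i = f y i)
    (p : (Fin n → ℝ) → ENNReal) (hp : Measurable p) :
    (volume.withDensity p).map (Function.invFun (fun x : Fin n → ℝ => x - f x))
      = volume.withDensity (fun x => p (x - f x)) :=
  density_of_scm_solution_general n f hf htri p
end
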